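/- For every n ≥ 1 and every finite alphabet Σ, the number of prime palstars of length 2n over Σ equals the number of unbordered words of length n over Σ; more precisely, the map z ↦ z ⧢ zᴿ is a bijection from the set of unbordered words of length n onto the set of prime palstars of length 2n. -/
import Mathlib


open scoped Computability

/-- `PAL` is the set of nonempty even-length palindromes `x ++ xᴿ`. -/
def PAL (α : Type) : Language α := {w | ∃ x : List α, x ≠ [] ∧ w = x ++ x.reverse}

/-- `PALSTAR` is the Kleene star of `PAL`. -/
def PALSTAR (α : Type) : Language α := (PAL α)∗

/-- A prime palstar: a nonempty palstar that is not a product of two nonempty palstars. -/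
def IsPrimePalstar {α : Type} (w : List α) : Prop :=
  w ∈ PALSTAR α ∧ w ≠ [] ∧
    ¬ ∃ u v : List α, u ∈ PALSTAR α ∧ v ∈ PALSTAR α ∧ u ≠ [] ∧ v ≠ [] ∧ w = u ++ v


/-- A word is bordered if it has the form `x ++ y ++ x` with `x` nonempty. -/
def Bordered {α : Type} (w : List α) : Prop := ∃ x y : List α, x ≠ [] ∧ w = x ++ y ++ x


/-- Perfect shuffle of two words (of equal length). -/
def pshuffle {α : Type} : List α → List α → List α
  | a :: x, b :: y => a :: b :: pshuffle x y
  | _, _ => []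

namespace PalAux

variable {α : Type}

theorem pshuffle_length : ∀ (x y : List α), x.length = y.length →
    (pshuffle x y).length = 2 * x.length
  | [], [], _ => rfl
  | [], _ :: _, h => by simp at h
  | _ :: _, [], h => by simp at h
  | a :: x, b :: y, h => by
    simp only [pshuffle, List.length_cons] at *
    rw [pshuffle_length x y (by omega)]
    omega

theorem pshuffle_getElem_even : ∀ (x y : List α) (i : ℕ) (hi : i < x.length)
    (h : 2 * i < (pshuffle x y).length), (pshuffle x y)[2 * i] = x[i]'hi
  | a :: x, b :: y, 0, hi, h => by simp [pshuffle]
  | a :: x, b :: y, i + 1, hi, h => by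
    simp only [pshuffle, List.length_cons] at h ⊢
    have e : 2 * (i + 1) = (2 * i) + 1 + 1 := by ring
    simp only [e, List.getElem_cons_succ]
    exact pshuffle_getElem_even x y i (by simpa using hi) (by omega)
  | [], y, i, hi, h => by simp at hi
  | a :: x, [], i, hi, h => by simp [pshuffle] at h

theorem pshuffle_getElem_odd : ∀ (x y : List α) (i : ℕ) (hi : i < y.length)
    (h : 2 * i + 1 < (pshuffle x y).length), (pshuffle x y)[2 * i + 1] = y[i]'hi
  | a :: x, b :: y, 0, hi, h => by simp [pshuffle]
  | a :: x, b :: y, i + 1, hi, h => by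
    simp only [pshuffle, List.length_cons] at h ⊢
    have e : 2 * (i + 1) + 1 = ((2 * i) + 1) + 1 + 1 := by ring
    simp only [e, List.getElem_cons_succ]
    exact pshuffle_getElem_odd x y i (by simpa using hi) (by omega)
  | [], y, i, hi, h => by simp [pshuffle] at h
  | a :: x, [], i, hi, h => by simp at hi

theorem pshuffle_append : ∀ (a c b d : List α), a.length = c.length →
    pshuffle (a ++ b) (c ++ d) = pshuffle a c ++ pshuffle b d
  | [], [], b, d, _ => by rfl
  | [], _ :: _, _, _, h => by simp at h
  | _ :: _, [], _, _, h => by simp at h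
  | x :: a, y :: c, b, d, h => by
    simp only [List.cons_append, pshuffle, List.length_cons, List.append_eq] at *
    rw [pshuffle_append a c b d (by omega)]

theorem gec (l : List α) {i j : ℕ} (hij : i = j) (hj : j < l.length) :
    l[i]'(hij ▸ hj) = l[j]'hj := by subst hij; rfl


theorem nil_mem_palstar : ([] : List α) ∈ PALSTAR α := by
  rw [PALSTAR, Language.mem_kstar_iff_exists_nonempty]
  exact ⟨[], by simp, by simp⟩

theorem pal_mem_palstar {w : List α} (h : w ∈ PAL α) : w ∈ PALSTAR α := by
  obtain ⟨x, hx, rfl⟩ := h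
  rw [PALSTAR, Language.mem_kstar_iff_exists_nonempty]
  refine ⟨[x ++ x.reverse], by simp, ?_⟩
  intro y hy
  simp only [List.mem_singleton] at hy
  subst hy
  exact ⟨⟨x, hx, rfl⟩, by simp [hx]⟩

theorem palstar_append {u v : List α} (hu : u ∈ PALSTAR α) (hv : v ∈ PALSTAR α) :
    u ++ v ∈ PALSTAR α := by
  rw [PALSTAR, Language.mem_kstar_iff_exists_nonempty] at *
  obtain ⟨S, rfl, hS⟩ := hu
  obtain ⟨T, rfl, hT⟩ := hv
  refine ⟨S ++ T, by simp, ?_⟩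
  intro y hy
  rcases List.mem_append.mp hy with h | h
  · exact hS y h
  · exact hT y h

theorem palstar_head {w : List α} (hw : w ∈ PALSTAR α) (h0 : w ≠ []) :
    ∃ p q, p ∈ PAL α ∧ p ≠ [] ∧ q ∈ PALSTAR α ∧ w = p ++ q := by
  rw [PALSTAR, Language.mem_kstar_iff_exists_nonempty] at hw
  obtain ⟨S, rfl, hS⟩ := hw
  cases S with
  | nil => simp at h0
  | cons p T =>
    refine ⟨p, T.flatten, (hS p (by simp)).1, (hS p (by simp)).2, ?_, by simp⟩
    rw [PALSTAR, Language.mem_kstar_iff_exists_nonempty]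
    exact ⟨T, rfl, fun y hy => hS y (by simp [hy])⟩

theorem getElem_of_rev_eq {p : List α} (h : p.reverse = p) {j : ℕ} (hj : j < p.length) :
    p[j]'hj = p[p.length - 1 - j]'(by omega) := by
  have h1 : j < p.reverse.length := by simp; omega
  have := List.getElem_reverse (l := p) (i := j) h1
  rw [List.getElem_of_eq h h1] at this
  exact this
-- length of z ⧢ zᴿ
theorem srev_length (z : List α) : (pshuffle z z.reverse).length = 2 * z.length :=
  pshuffle_length z z.reverse (by simp)

theorem srev_even (z : List α) (i : ℕ) (hi : i < z.length)
    (h : 2 * i < (pshuffle z z.reverse).length) :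
    (pshuffle z z.reverse)[2 * i] = z[i]'hi :=
  pshuffle_getElem_even z z.reverse i hi h

theorem srev_odd (z : List α) (i : ℕ) (hi : i < z.length)
    (h : 2 * i + 1 < (pshuffle z z.reverse).length) :
    (pshuffle z z.reverse)[2 * i + 1] = z[z.length - 1 - i]'(by omega) := by
  rw [pshuffle_getElem_odd z z.reverse i (by simpa using hi) h]
  exact List.getElem_reverse _

theorem srev_palindrome (z : List α) :
    (pshuffle z z.reverse).reverse = pshuffle z z.reverse := by
  have hl := srev_length z
  apply List.ext_getElem (by simp)
  intro j h1 h2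
  have h1' : j < 2 * z.length := by omega
  rw [List.getElem_reverse]
  rcases Nat.even_or_odd j with ⟨i, hj⟩ | ⟨i, hj⟩
  · subst hj
    have hi : i < z.length := by omega
    rw [gec (pshuffle z z.reverse)
      (show (pshuffle z z.reverse).length - 1 - (i + i) = 2 * (z.length - 1 - i) + 1 by omega)
      (by omega),
      gec (pshuffle z z.reverse) (show i + i = 2 * i by omega) (by omega)]
    rw [srev_odd z _ (by omega) (by omega), srev_even z i hi (by omega)]
    exact gec z (by omega) hi
  · subst hj
    have hi : i < z.length := by omega
    rw [gec (pshuffle z z.reverse)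
      (show (pshuffle z z.reverse).length - 1 - (2 * i + 1) = 2 * (z.length - 1 - i) by omega)
      (by omega)]
    rw [srev_even z _ (by omega) (by omega), srev_odd z i hi (by omega)]

theorem palindrome_mem_PAL {w : List α} (h1 : w ≠ []) (h2 : Even w.length)
    (h3 : w.reverse = w) : w ∈ PAL α := by
  obtain ⟨m, hm⟩ := h2
  have hw0 : w.length ≠ 0 := by simpa using h1
  have hkey : (w.drop m).reverse ++ (w.take m).reverse = w.take m ++ w.drop m := by
    rw [← List.reverse_append, List.take_append_drop, h3]
  have hlen : (w.drop m).reverse.length = (w.take m).length := by simp; omega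
  have h4 := (List.append_inj hkey hlen).1
  refine ⟨w.take m, ?_, ?_⟩
  · have hmlen : (w.take m).length = m := by simp; omega
    intro h
    rw [h] at hmlen
    simp at hmlen
    omega
  · conv_lhs => rw [← List.take_append_drop m w]
    rw [← h4, List.reverse_reverse]

theorem srev_mem_PAL {z : List α} (hz : z ≠ []) : pshuffle z z.reverse ∈ PAL α :=
  palindrome_mem_PAL (by
      intro h
      have := srev_length z
      rw [h] at this; simp at this
      exact hz this)
    ⟨z.length, by rw [srev_length z]; ring⟩ (srev_palindrome z)


theorem border_getElem {z : List α} {k : ℕ} (hk : k ≤ z.length)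
    (hb : z.take k = z.drop (z.length - k)) (i : ℕ) (hi : i < k) :
    z[i]'(by omega) = z[z.length - k + i]'(by omega) := by
  have hlt : i < (z.take k).length := by simp; omega
  have hlt2 : i < (z.drop (z.length - k)).length := by simp; omega
  have h1 : (z.take k)[i]'hlt = (z.drop (z.length - k))[i]'hlt2 := by
    simp only [hb]
  rwa [List.getElem_take, List.getElem_drop] at h1

theorem border_of_getElem {z : List α} {k : ℕ} (hk : k ≤ z.length)
    (hg : ∀ i (hi : i < k), z[i]'(by omega) = z[z.length - k + i]'(by omega)) :
    z.take k = z.drop (z.length - k) := by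
  apply List.ext_getElem (by simp; omega)
  intro i h1 h2
  simp only [List.getElem_take, List.getElem_drop]
  have hik : i < k := by simp at h1; omega
  exact hg i hik

theorem bordered_of_border (z : List α) : ∀ k, 1 ≤ k → k < z.length →
    z.take k = z.drop (z.length - k) → Bordered z := by
  intro k
  induction k using Nat.strong_induction_on with
  | _ k ih =>
    intro hk1 hkn hb
    by_cases h2 : 2 * k ≤ z.length
    · refine ⟨z.take k, (z.drop k).take (z.length - 2 * k), ?_, ?_⟩
      · have hlen : (z.take k).length = k := by simp; omega
        intro h
        rw [h] at hlen
        simp at hlen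
        omega
      · conv_lhs => rw [← List.take_append_drop (z.length - k) z]
        rw [← hb,
          show z.length - k = k + (z.length - 2 * k) by omega, List.take_add]
    · push_neg at h2
      have hg := border_getElem (le_of_lt hkn) hb
      apply ih (2 * k - z.length) (by omega) (by omega) (by omega)
      apply border_of_getElem (by omega)
      intro i hi
      have e1 := hg i (by omega)
      have e2 := hg (z.length - k + i) (by omega)
      rw [gec z (show z.length - k + (z.length - k + i)
            = z.length - (2 * k - z.length) + i by omega) (by omega)] at e2
      rw [e1, e2]

end PalAux

open PalAux in
/-- For `n ≥ 1`, the map `z ↦ z ⧢ zᴿ` is a bijection from unbordered words of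
length `n` onto prime palstars of length `2n`; in particular the two sets have
the same cardinality. -/
theorem primePalstar_count_eq_unbordered_count {α : Type} [Fintype α]
    (n : ℕ) (hn : 1 ≤ n) :
    Set.BijOn (fun z : List α => pshuffle z z.reverse)
      {z : List α | z.length = n ∧ ¬ Bordered z}
      {w : List α | w.length = 2 * n ∧ IsPrimePalstar w} ∧
    Set.ncard {w : List α | w.length = 2 * n ∧ IsPrimePalstar w}
      = Set.ncard {z : List α | z.length = n ∧ ¬ Bordered z} := by
  have hmaps : Set.MapsTo (fun z : List α => pshuffle z z.reverse)
      {z : List α | z.length = n ∧ ¬ Bordered z}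
      {w : List α | w.length = 2 * n ∧ IsPrimePalstar w} := by
    rintro z ⟨hzl, hzb⟩
    have hzne : z ≠ [] := by
      intro h; rw [h] at hzl; simp at hzl; omega
    have hwlen : (pshuffle z z.reverse).length = 2 * z.length := srev_length z
    simp only [Set.mem_setOf_eq]
    refine ⟨by rw [hwlen, hzl], ?_, ?_, ?_⟩
    · exact pal_mem_palstar (srev_mem_PAL hzne)
    · intro h; rw [h] at hwlen; simp at hwlen; exact hzne hwlen
    · rintro ⟨u, v, hu, hv, hu0, hv0, heq⟩
      replace heq : pshuffle z z.reverse = u ++ v := heq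
      obtain ⟨p, q, hp, hp0, hq, hpq⟩ := palstar_head hu hu0
      obtain ⟨a, ha0, hpa⟩ := hp
      have hk1 : 1 ≤ a.length := List.length_pos_iff.mpr ha0
      have hplen : p.length = 2 * a.length := by rw [hpa]; simp; ring
      have hvlen : 1 ≤ v.length := List.length_pos_iff.mpr hv0
      have hkn : a.length < z.length := by
        have h1 : u.length + v.length = 2 * z.length := by
          rw [← List.length_append, ← heq, hwlen]
        have h2 : p.length ≤ u.length := by
          rw [hpq]; simp
        omega
      have hppal : p.reverse = p := by rw [hpa]; simp
      have hweq : pshuffle z z.reverse = p ++ (q ++ v) := by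
        rw [heq, hpq, List.append_assoc]
      have hg : ∀ i, (hi : i < a.length) →
          z[i]'(by omega) = z[z.length - a.length + i]'(by omega) := by
        intro i hi
        have b1 : 2 * i < (pshuffle z z.reverse).length := by omega
        have b2 : 2 * (a.length - 1 - i) + 1 < (pshuffle z z.reverse).length := by omega
        have e1 : z[i]'(by omega) = (pshuffle z z.reverse)[2 * i]'b1 :=
          (srev_even z i (by omega) b1).symm
        have e2 : (pshuffle z z.reverse)[2 * i]'b1 = p[2 * i]'(by omega) := by
          rw [List.getElem_of_eq hweq b1]
          exact List.getElem_append_left (by omega)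
        have e3 : p[2 * i]'(by omega) = p[2 * (a.length - 1 - i) + 1]'(by omega) := by
          rw [getElem_of_rev_eq hppal (by omega)]
          exact gec p (by omega) (by omega)
        have e4 : p[2 * (a.length - 1 - i) + 1]'(by omega)
            = (pshuffle z z.reverse)[2 * (a.length - 1 - i) + 1]'b2 := by
          rw [List.getElem_of_eq hweq b2]
          exact (List.getElem_append_left (by omega)).symm
        have e5 := srev_odd z (a.length - 1 - i) (by omega) b2
        rw [e1, e2, e3, e4, e5]
        exact gec z (by omega) (by omega)
      exact hzb (bordered_of_border z a.length hk1 hkn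
        (border_of_getElem (by omega) hg))
  have hinj : Set.InjOn (fun z : List α => pshuffle z z.reverse)
      {z : List α | z.length = n ∧ ¬ Bordered z} := by
    rintro z1 ⟨h1l, _⟩ z2 ⟨h2l, _⟩ heq
    simp only at heq
    apply List.ext_getElem (by rw [h1l, h2l])
    intro i hi1 hi2
    have b1 : 2 * i < (pshuffle z1 z1.reverse).length := by
      rw [srev_length]; omega
    have b2 : 2 * i < (pshuffle z2 z2.reverse).length := by
      rw [srev_length]; omega
    rw [← srev_even z1 i hi1 b1, ← srev_even z2 i hi2 b2]
    exact List.getElem_of_eq heq b1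
  have hsurj : Set.SurjOn (fun z : List α => pshuffle z z.reverse)
      {z : List α | z.length = n ∧ ¬ Bordered z}
      {w : List α | w.length = 2 * n ∧ IsPrimePalstar w} := by
    rintro w ⟨hwl, hwstar, hwne, hwprime⟩
    obtain ⟨p, q, hp, hp0, hq, hpq⟩ := palstar_head hwstar hwne
    have hq0 : q = [] := by
      by_contra h
      exact hwprime ⟨p, q, pal_mem_palstar hp, hq, hp0, h, hpq⟩
    rw [hq0, List.append_nil] at hpq
    have hwpal : w ∈ PAL α := hpq ▸ hp
    obtain ⟨x, hx0, hwx⟩ := hwpal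
    have hrev : w.reverse = w := by rw [hwx]; simp
    set z : List α := List.ofFn (fun i : Fin n => w[2 * (i : ℕ)]'(by omega)) with hz
    have hzlen : z.length = n := by simp [hz]
    have hzget : ∀ i, (hi : i < n) → z[i]'(by omega) = w[2 * i]'(by omega) := by
      intro i hi
      simp [hz, List.getElem_ofFn]
    have hzrevget : ∀ i, (hi : i < n) →
        z.reverse[i]'(by simp; omega) = w[2 * i + 1]'(by omega) := by
      intro i hi
      rw [List.getElem_reverse]
      rw [gec z (show z.length - 1 - i = n - 1 - i by omega) (by omega)]
      rw [hzget (n - 1 - i) (by omega)]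
      rw [getElem_of_rev_eq hrev (j := 2 * i + 1) (by omega)]
      exact (gec w (by omega) (by omega)).symm
    have hwshuf : pshuffle z z.reverse = w := by
      apply List.ext_getElem (by rw [srev_length, hzlen, hwl])
      intro j h1 h2
      have hj2 : j < 2 * n := by omega
      rcases Nat.even_or_odd j with ⟨i, hj⟩ | ⟨i, hj⟩ <;> subst hj
      · rw [gec (pshuffle z z.reverse) (show i + i = 2 * i by omega) (by omega),
          srev_even z i (by omega) (by omega), hzget i (by omega)]
        exact gec w (by omega) (by omega)
      · rw [pshuffle_getElem_odd z z.reverse i (by simp; omega) (by omega),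
          hzrevget i (by omega)]
    have hub : ¬ Bordered z := by
      rintro ⟨x', y', hx'0, hzd⟩
      have hsplit : pshuffle z z.reverse
          = (pshuffle x' x'.reverse ++ pshuffle y' y'.reverse) ++ pshuffle x' x'.reverse := by
        conv_lhs => rw [hzd]
        have hrz : ((x' ++ y') ++ x').reverse = (x'.reverse ++ y'.reverse) ++ x'.reverse := by
          simp [List.reverse_append, List.append_assoc]
        rw [hrz, pshuffle_append _ _ _ _ (by simp),
          pshuffle_append _ _ _ _ (by simp)]
      have hx'ne : pshuffle x' x'.reverse ≠ [] := by
        intro h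
        have := srev_length x'
        rw [h] at this
        simp at this
        exact hx'0 this
      apply hwprime
      refine ⟨pshuffle x' x'.reverse,
        pshuffle y' y'.reverse ++ pshuffle x' x'.reverse,
        pal_mem_palstar (srev_mem_PAL hx'0), palstar_append ?_
          (pal_mem_palstar (srev_mem_PAL hx'0)), hx'ne, by simp [hx'ne], ?_⟩
      · by_cases hy' : y' = []
        · subst hy'
          exact nil_mem_palstar
        · exact pal_mem_palstar (srev_mem_PAL hy')
      · rw [← hwshuf, hsplit, List.append_assoc]
    exact ⟨z, ⟨hzlen, hub⟩, hwshuf⟩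
  have hbij : Set.BijOn (fun z : List α => pshuffle z z.reverse)
      {z : List α | z.length = n ∧ ¬ Bordered z}
      {w : List α | w.length = 2 * n ∧ IsPrimePalstar w} := ⟨hmaps, hinj, hsurj⟩
  refine ⟨hbij, ?_⟩
  rw [← hbij.image_eq]
  exact Set.ncard_image_of_injOn hinj
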